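/- arXiv:1601.01183 — 7 statements merged into one kernel-verified Lean document; each statement's English description precedes it below -/
import Mathlib

section
/- Let ω ∈ (0,1), δ, θ > 0, l₀ = δ/(N-1) with N ≥ 2, l₁ = 1 - l₀, l₂ = 1 + l₀, and K(ξ) = ξ³ - l₁ω ξ² - ((δ/θ)ω² + l₀ω² + l₂ω)ξ + l₂ω². If K(1) = (1-ω)² - (δ/θ)ω² > 0, then K has exactly one root ξ_o in the open interval (ω, 1), and K is negative on (ω, ξ_o) and positive on (ξ_o, 1]. -/
theorem K_unique_root (ω δ θ : ℝ) (N : ℕ) (hω : ω ∈ Set.Ioo (0:ℝ) 1)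
    (hδ : 0 < δ) (hθ : 0 < θ) (hN : 2 ≤ N)
    (l₀ l₁ l₂ : ℝ) (hl₀ : l₀ = δ / (N - 1)) (hl₁ : l₁ = 1 - l₀) (hl₂ : l₂ = 1 + l₀)
    (K : ℝ → ℝ)
    (hK : K = fun ξ => ξ^3 - l₁*ω*ξ^2 - ((δ/θ)*ω^2 + l₀*ω^2 + l₂*ω)*ξ + l₂*ω^2)
    (hK1 : 0 < (1 - ω)^2 - (δ/θ)*ω^2) :
    ∃ ξo ∈ Set.Ioo ω 1, K ξo = 0 ∧
      (∀ ξ ∈ Set.Ioo ω 1, K ξ = 0 → ξ = ξo) ∧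
      (∀ ξ ∈ Set.Ioo ω ξo, K ξ < 0) ∧
      (∀ ξ ∈ Set.Ioc ξo 1, 0 < K ξ) := by
  obtain ⟨hω0, hω1⟩ := hω
  have hN' : (2:ℝ) ≤ (N:ℝ) := by exact_mod_cast hN
  have hl₀pos : 0 < l₀ := by
    rw [hl₀]; exact div_pos hδ (by linarith)
  have hKω : K ω = -((δ/θ)*ω^3) := by rw [hK, hl₁, hl₂]; ring
  have hKωneg : K ω < 0 := by
    rw [hKω]
    have : 0 < (δ/θ)*ω^3 := by positivity
    linarith
  have hK1v : K 1 = (1-ω)^2 - (δ/θ)*ω^2 := by rw [hK, hl₁, hl₂]; ring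
  have hK1pos : 0 < K 1 := by rw [hK1v]; exact hK1
  -- Key convexity-type lemma
  have lemA : ∀ a b : ℝ, ω < a → a < b → b ≤ 1 → 0 ≤ K a → 0 < K b := by
    intro a b h1 h2 h3 h4
    have key : (a-ω)*K b =
        (b-a)*(a-ω)*(b-ω)*(a+b+ω-l₁*ω) + (b-ω)*K a - (b-a)*K ω := by
      rw [hK]; ring
    have hl₁ω : l₁*ω < ω := by nlinarith [hl₀pos, hω0]
    have hfac : 0 < a+b+ω-l₁*ω := by nlinarith
    have hP : 0 < (b-a)*(a-ω)*(b-ω)*(a+b+ω-l₁*ω) := by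
      have hbω : ω < b := h1.trans h2
      have := mul_pos (mul_pos (mul_pos (sub_pos.2 h2) (sub_pos.2 h1))
        (sub_pos.2 hbω)) hfac
      exact this
    have h5 : 0 < (a-ω)*K b := by nlinarith [mul_nonneg (sub_pos.2 (h1.trans h2)).le h4]
    by_contra h
    push_neg at h
    nlinarith [mul_nonpos_of_nonneg_of_nonpos (sub_pos.2 h1).le h]
  -- existence by IVT
  have hcont : ContinuousOn K (Set.Icc ω 1) := by
    rw [hK]; fun_prop
  have := intermediate_value_Ioo hω1.le hcont
  have h0mem : (0:ℝ) ∈ Set.Ioo (K ω) (K 1) := ⟨hKωneg, hK1pos⟩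
  obtain ⟨ξo, hmem, hKξo⟩ := this h0mem
  refine ⟨ξo, hmem, hKξo, ?_, ?_, ?_⟩
  · intro ξ hξ h0
    rcases lt_trichotomy ξ ξo with h | h | h
    · exact absurd (lemA ξ ξo hξ.1 h hmem.2.le h0.ge) (by rw [hKξo]; exact lt_irrefl 0)
    · exact h
    · exact absurd (lemA ξo ξ hmem.1 h hξ.2.le hKξo.ge) (by rw [h0]; exact lt_irrefl 0)
  · intro ξ hξ
    by_contra h
    push_neg at h
    exact absurd (lemA ξ ξo hξ.1 hξ.2 hmem.2.le h) (by rw [hKξo]; exact lt_irrefl 0)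
  · intro ξ hξ
    exact lemA ξo ξ hmem.1 hξ.1 hξ.2 hKξo.ge
end

section
/- Suppose ξ_o ∈ (ω, 1] satisfies δ/θ = (ξ_o² + l₀ω ξ_o - l₂ω)(ξ_o - ω)/(ω² ξ_o) with δ/θ > 0, ω > 0, l₀ ∈ (0,1), l₂ = 1 + l₀. Then ξ_o² + l₀ω ξ_o - l₂ω > 0 and consequently ξ_o > √ω. -/
theorem xi_gt_sqrt_omega (ω δ θ ξo l₀ l₂ : ℝ) (hω : ω ∈ Set.Ioo (0:ℝ) 1)
    (hδ : 0 < δ) (hθ : 0 < θ) (hl₀ : l₀ ∈ Set.Ioo (0:ℝ) 1) (hl₂ : l₂ = 1 + l₀)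
    (hξ : ξo ∈ Set.Ioc ω 1)
    (heq : δ/θ = (ξo^2 + l₀*ω*ξo - l₂*ω) * (ξo - ω) / (ω^2 * ξo)) :
    0 < ξo^2 + l₀*ω*ξo - l₂*ω ∧ Real.sqrt ω < ξo := by
  obtain ⟨hω0, hω1⟩ := hω
  obtain ⟨hξω, hξ1⟩ := hξ
  obtain ⟨hl0, _⟩ := hl₀
  have hξ0 : 0 < ξo := lt_trans hω0 hξω
  have hden : 0 < ω^2 * ξo := by positivity
  have hδθ : 0 < δ/θ := div_pos hδ hθ
  have hnum : 0 < (ξo^2 + l₀*ω*ξo - l₂*ω) * (ξo - ω) := by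
    have := heq ▸ hδθ
    exact (div_pos_iff.mp this).resolve_right (fun h => absurd hden (not_lt.mpr h.2.le)) |>.1
  have hQ : 0 < ξo^2 + l₀*ω*ξo - l₂*ω :=
    mul_pos_iff.mp hnum |>.resolve_right
      (fun h => absurd (sub_pos.mpr hξω) (not_lt.mpr h.2.le)) |>.1
  refine ⟨hQ, ?_⟩
  rw [show Real.sqrt ω < ξo ↔ ω < ξo^2 from Real.sqrt_lt' hξ0]
  nlinarith [mul_nonneg (mul_nonneg hl0.le hω0.le) (sub_nonneg.mpr hξ1)]
end

section
/- Let l₀ ∈ (0,1), l₁ = 1 - l₀, l₂ = 1 + l₀, δ, θ > 0. Define, for each ω > 0, ξ_o(ω) as the unique root in (ω, 1) of K(ξ; ω) = ξ³ - l₁ω ξ² - ((δ/θ)ω² + l₀ω² + l₂ω)ξ + l₂ω² (assuming K(1; ω) > 0). Then ξ_o is a strictly increasing function of ω: if ω₁ < ω₂ (both admitting interior roots), then ξ_o(ω₁) < ξ_o(ω₂). -/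
set_option maxHeartbeats 1000000 in
theorem xi_o_increasing_in_omega (δ θ l₀ l₁ l₂ : ℝ) (N : ℕ)
    (hδ : 0 < δ) (hθ : 0 < θ) (hN : 2 ≤ N)
    (hl₀ : l₀ = δ / (N - 1)) (hl₀' : l₀ ∈ Set.Ioo (0:ℝ) 1)
    (hl₁ : l₁ = 1 - l₀) (hl₂ : l₂ = 1 + l₀)
    (K : ℝ → ℝ → ℝ)
    (hK : K = fun ω ξ => ξ^3 - l₁*ω*ξ^2 - ((δ/θ)*ω^2 + l₀*ω^2 + l₂*ω)*ξ + l₂*ω^2)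
    (ω₁ ω₂ ξ₁ ξ₂ : ℝ)
    (hω₁ : ω₁ ∈ Set.Ioo (0:ℝ) 1) (hω₂ : ω₂ ∈ Set.Ioo (0:ℝ) 1) (hωlt : ω₁ < ω₂)
    (hK11 : 0 < K ω₁ 1) (hK21 : 0 < K ω₂ 1)
    (hξ₁ : ξ₁ ∈ Set.Ioo ω₁ 1) (hξ₂ : ξ₂ ∈ Set.Ioo ω₂ 1)
    (hroot₁ : K ω₁ ξ₁ = 0) (hroot₂ : K ω₂ ξ₂ = 0) :
    ξ₁ < ξ₂ := by
  subst hK hl₁ hl₂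
  obtain ⟨hl0, hl0'⟩ := hl₀'
  obtain ⟨hω₁0, hω₁1⟩ := hω₁
  obtain ⟨hω₂0, hω₂1⟩ := hω₂
  obtain ⟨hξ₁l, hξ₁u⟩ := hξ₁
  obtain ⟨hξ₂l, hξ₂u⟩ := hξ₂
  simp only at hK11 hK21 hroot₁ hroot₂
  have hc : 0 < δ/θ := div_pos hδ hθ
  have hξ₁0 : 0 < ξ₁ := lt_trans hω₁0 hξ₁l
  have hξ₂0 : 0 < ξ₂ := lt_trans hω₂0 hξ₂l
  by_contra hcon
  push_neg at hcon   -- hcon : ξ₂ ≤ ξ₁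
  have hω₂ξ₁ : ω₂ < ξ₁ := lt_of_lt_of_le hξ₂l hcon
  -- Step B : K ω₂ ξ₁ < 0 via Lagrange interpolation in ω at nodes 0, ω₁, ξ₁
  have hB : (ω₁*ξ₁*(ξ₁-ω₁)) *
      (ξ₁^3 - (1-l₀)*ω₂*ξ₁^2 - ((δ/θ)*ω₂^2 + l₀*ω₂^2 + (1+l₀)*ω₂)*ξ₁ + (1+l₀)*ω₂^2)
      = ξ₁^3 * ((ξ₁-ω₁)*(ω₂-ω₁)*(ω₂-ξ₁)) - (δ/θ)*ξ₁^3 * (ω₁*ω₂*(ω₂-ω₁)) := by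
    linear_combination (-ξ₁*ω₂*(ω₂-ξ₁)) * hroot₁
  have hKneg : ξ₁^3 - (1-l₀)*ω₂*ξ₁^2 - ((δ/θ)*ω₂^2 + l₀*ω₂^2 + (1+l₀)*ω₂)*ξ₁
      + (1+l₀)*ω₂^2 < 0 := by
    have hden : 0 < ω₁*ξ₁*(ξ₁-ω₁) := by
      apply mul_pos (mul_pos hω₁0 hξ₁0); linarith
    have h1 : ξ₁^3 * ((ξ₁-ω₁)*(ω₂-ω₁)*(ω₂-ξ₁)) < 0 := by
      apply mul_neg_of_pos_of_neg (by positivity)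
      apply mul_neg_of_pos_of_neg (mul_pos (by linarith) (by linarith))
      linarith
    have h2 : 0 < (δ/θ)*ξ₁^3 * (ω₁*ω₂*(ω₂-ω₁)) := by
      apply mul_pos (by positivity)
      exact mul_pos (mul_pos hω₁0 hω₂0) (by linarith)
    nlinarith [hB, hden]
  -- Hence ξ₂ < ξ₁ strictly
  have hlt : ξ₂ < ξ₁ := by
    rcases lt_or_eq_of_le hcon with h | h
    · exact h
    · exfalso; rw [h] at hroot₂; linarith
  -- Factor K ω₂ ξ = (ξ - ξ₂) * (ξ² + p ξ + q), with q < 0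
  obtain ⟨p, q, hq0, hfact⟩ : ∃ p q : ℝ, q < 0 ∧ ∀ ξ : ℝ,
      ξ^3 - (1-l₀)*ω₂*ξ^2 - ((δ/θ)*ω₂^2 + l₀*ω₂^2 + (1+l₀)*ω₂)*ξ + (1+l₀)*ω₂^2
      = (ξ - ξ₂) * (ξ^2 + p*ξ + q) := by
    refine ⟨ξ₂ - (1-l₀)*ω₂,
      ξ₂^2 - (1-l₀)*ω₂*ξ₂ - ((δ/θ)*ω₂^2 + l₀*ω₂^2 + (1+l₀)*ω₂), ?_, ?_⟩
    · by_contra h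
      push_neg at h
      nlinarith [mul_nonneg hξ₂0.le h, mul_pos hω₂0 hω₂0,
        mul_pos hl0 (mul_pos hω₂0 hω₂0)]
    · intro ξ
      linear_combination hroot₂
  -- IVT: root r₀ of K ω₂ · in (0, ω₂)
  have hcont : ContinuousOn (fun ξ : ℝ =>
      ξ^3 - (1-l₀)*ω₂*ξ^2 - ((δ/θ)*ω₂^2 + l₀*ω₂^2 + (1+l₀)*ω₂)*ξ + (1+l₀)*ω₂^2)
      (Set.Icc 0 ω₂) := by
    apply Continuous.continuousOn
    fun_prop
  have hivt := intermediate_value_Ioo' (le_of_lt hω₂0) hcont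
  have h0mem : (0:ℝ) ∈ Set.Ioo
      ((fun ξ : ℝ => ξ^3 - (1-l₀)*ω₂*ξ^2 - ((δ/θ)*ω₂^2 + l₀*ω₂^2 + (1+l₀)*ω₂)*ξ
        + (1+l₀)*ω₂^2) ω₂)
      ((fun ξ : ℝ => ξ^3 - (1-l₀)*ω₂*ξ^2 - ((δ/θ)*ω₂^2 + l₀*ω₂^2 + (1+l₀)*ω₂)*ξ
        + (1+l₀)*ω₂^2) 0) := by
    constructor
    · simp only
      nlinarith [mul_pos (mul_pos hω₂0 hω₂0) hω₂0]
    · simp only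
      nlinarith [mul_pos hω₂0 hω₂0]
  obtain ⟨r₀, hr₀mem, hr₀⟩ := hivt h0mem
  obtain ⟨hr₀0, hr₀ω₂⟩ := hr₀mem
  simp only at hr₀
  -- Q r₀ = 0
  have hQr₀ : r₀^2 + p*r₀ + q = 0 := by
    have := hfact r₀
    rw [hr₀] at this
    have hne : r₀ - ξ₂ ≠ 0 := sub_ne_zero.mpr (ne_of_lt (by linarith))
    rcases mul_eq_zero.mp this.symm with h | h
    · exact absurd h hne
    · exact h
  -- Q ξ₁ < 0
  have hQξ₁ : ξ₁^2 + p*ξ₁ + q < 0 := by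
    have := hfact ξ₁
    rw [this] at hKneg
    have h1 : 0 < ξ₁ - ξ₂ := by linarith
    nlinarith [hKneg]
  -- Contradiction: r₀ * Q(ξ₁) = (ξ₁ - r₀)(ξ₁ r₀ - q) > 0
  have hr₀ξ₁ : r₀ < ξ₁ := lt_trans hr₀ω₂ hω₂ξ₁
  nlinarith [mul_pos (sub_pos.2 hr₀ξ₁) (sub_pos.2 (lt_of_lt_of_le hq0 (le_of_lt (mul_pos hξ₁0 hr₀0)))),
    mul_neg_of_pos_of_neg hr₀0 hQξ₁, hQr₀, mul_pos hξ₁0 hr₀0]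
end

section
/- With the setting of the previous statement, at the unique root ξ_o ∈ (ω,1) of K(ξ; ω) = 0, one has ∂K/∂ξ evaluated at ξ_o equals l₁ ξ_o (ξ_o - ω) + (l₂/ξ_o)(ξ_o³ - ω²) and this quantity is strictly positive. -/
theorem dK_dxi_positive (ω δ θ l₀ l₁ l₂ ξo : ℝ) (N : ℕ)
    (hω : ω ∈ Set.Ioo (0:ℝ) 1) (hδ : 0 < δ) (hθ : 0 < θ) (hN : 2 ≤ N)
    (hl₀ : l₀ = δ / (N - 1)) (hl₀' : l₀ ∈ Set.Ioo (0:ℝ) 1)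
    (hl₁ : l₁ = 1 - l₀) (hl₂ : l₂ = 1 + l₀)
    (K : ℝ → ℝ)
    (hK : K = fun ξ => ξ^3 - l₁*ω*ξ^2 - ((δ/θ)*ω^2 + l₀*ω^2 + l₂*ω)*ξ + l₂*ω^2)
    (hξ : ξo ∈ Set.Ioo ω 1) (hroot : K ξo = 0) :
    deriv K ξo = l₁*ξo*(ξo - ω) + (l₂/ξo)*(ξo^3 - ω^2) ∧ 0 < deriv K ξo := by
  obtain ⟨hω0, hω1⟩ := hω
  obtain ⟨hξ1, hξ2⟩ := hξ
  obtain ⟨hL0, hL1⟩ := hl₀'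
  have hξo0 : 0 < ξo := hω0.trans hξ1
  subst hl₁ hl₂ hK
  simp only at hroot
  have hδθ : 0 < δ / θ := div_pos hδ hθ
  obtain ⟨A, hA⟩ : ∃ A : ℝ, δ / θ = A := ⟨_, rfl⟩
  rw [hA] at hroot hδθ ⊢
  -- key inequality: ξo^2 > ω
  have hfac : (ξo - ω) * (ξo^2 + l₀*ω*ξo - (1+l₀)*ω) = A*ω^2*ξo := by
    linear_combination hroot
  have hpos : 0 < A*ω^2*ξo := by positivity
  have h3 : 0 < ξo^2 + l₀*ω*ξo - (1+l₀)*ω := by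
    by_contra h
    push_neg at h
    nlinarith [sub_pos.2 hξ1]
  have hkey : ω < ξo^2 := by
    nlinarith [mul_pos hL0 (mul_pos hω0 (sub_pos.2 hξ2))]
  have hcube : ω^2 < ξo^3 := by nlinarith
  -- derivative
  set C := A*ω^2 + l₀*ω^2 + (1+l₀)*ω with hC
  have hd : HasDerivAt (fun ξ : ℝ => ξ^3 - (1-l₀)*ω*ξ^2 - C*ξ + (1+l₀)*ω^2)
      (3*ξo^2 - (1-l₀)*ω*(2*ξo) - C) ξo := by
    have h1 := hasDerivAt_pow 3 ξo
    have h2 := (hasDerivAt_pow 2 ξo).const_mul ((1-l₀)*ω)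
    have h3' := (hasDerivAt_id ξo).const_mul C
    have h := ((h1.sub h2).sub h3').add_const ((1+l₀)*ω^2)
    refine h.congr_deriv ?_
    push_cast
    ring
  have hderiv : deriv (fun ξ : ℝ => ξ^3 - (1-l₀)*ω*ξ^2 - C*ξ + (1+l₀)*ω^2) ξo
      = 3*ξo^2 - (1-l₀)*ω*(2*ξo) - C := hd.deriv
  have heq : 3*ξo^2 - (1-l₀)*ω*(2*ξo) - C
      = (1-l₀)*ξo*(ξo - ω) + ((1+l₀)/ξo)*(ξo^3 - ω^2) := by
    rw [hC]
    field_simp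
    linear_combination hroot
  refine ⟨by rw [hderiv, heq], ?_⟩
  rw [hderiv, heq]
  have t1 : 0 < (1-l₀)*ξo*(ξo - ω) :=
    mul_pos (mul_pos (by linarith) hξo0) (by linarith)
  have t2 : 0 < ((1+l₀)/ξo)*(ξo^3 - ω^2) :=
    mul_pos (div_pos (by linarith) hξo0) (by linarith)
  linarith
end

section
/- Fix δ ∈ (0,1), N ≥ 2, L > 0, and set l₀ = δ/(N-1), l₂ = 1 + l₀. For each ξ ∈ [0,1] there exists a unique ϱ(ξ) > 0 satisfying ϱ^δ (1 + ϱ(1-ξ)/(N-1))^{N-1} = L, and the map ξ ↦ ϱ(ξ) is strictly increasing on [0,1]. -/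
theorem rho_exists_unique_mono (δ L : ℝ) (N : ℕ) (hδ : δ ∈ Set.Ioo (0:ℝ) 1)
    (hN : 2 ≤ N) (hL : 0 < L)
    (l₀ l₂ : ℝ) (hl₀ : l₀ = δ / (N - 1)) (hl₂ : l₂ = 1 + l₀) :
    (∀ ξ ∈ Set.Icc (0:ℝ) 1, ∃! ϱ : ℝ,
        0 < ϱ ∧ ϱ ^ δ * (1 + ϱ*(1-ξ)/(N-1)) ^ (N-1) = L) ∧
    ∀ f : ℝ → ℝ,
      (∀ ξ ∈ Set.Icc (0:ℝ) 1,
        0 < f ξ ∧ (f ξ) ^ δ * (1 + (f ξ)*(1-ξ)/(N-1)) ^ (N-1) = L) →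
      StrictMonoOn f (Set.Icc (0:ℝ) 1) := by
  obtain ⟨hδ0, hδ1⟩ := hδ
  have hN1 : (1:ℝ) ≤ (N:ℝ) - 1 := by
    have : (2:ℝ) ≤ (N:ℝ) := by exact_mod_cast hN
    linarith
  have hN0 : (0:ℝ) < (N:ℝ) - 1 := by linarith
  have hn0 : N - 1 ≠ 0 := by omega
  set g : ℝ → ℝ → ℝ := fun ξ ϱ => ϱ ^ δ * (1 + ϱ*(1-ξ)/((N:ℝ)-1)) ^ (N-1) with hg
  have hfac1 : ∀ ξ ∈ Set.Icc (0:ℝ) 1, ∀ ϱ : ℝ, 0 ≤ ϱ →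
      (1:ℝ) ≤ 1 + ϱ*(1-ξ)/((N:ℝ)-1) := by
    intro ξ hξ ϱ hϱ
    have h : 0 ≤ ϱ*(1-ξ)/((N:ℝ)-1) :=
      div_nonneg (mul_nonneg hϱ (by linarith [hξ.2])) hN0.le
    linarith
  -- strict monotonicity in ϱ
  have hmono : ∀ ξ ∈ Set.Icc (0:ℝ) 1, ∀ a b : ℝ, 0 < a → a < b → g ξ a < g ξ b := by
    intro ξ hξ a b ha hab
    have hb : 0 < b := ha.trans hab
    have h1 : a ^ δ < b ^ δ := Real.rpow_lt_rpow ha.le hab hδ0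
    have hFa : (1:ℝ) ≤ 1 + a*(1-ξ)/((N:ℝ)-1) := hfac1 ξ hξ a ha.le
    have hFb : 1 + a*(1-ξ)/((N:ℝ)-1) ≤ 1 + b*(1-ξ)/((N:ℝ)-1) := by
      gcongr <;> linarith [hξ.2]
    have hpow : (1 + a*(1-ξ)/((N:ℝ)-1)) ^ (N-1) ≤ (1 + b*(1-ξ)/((N:ℝ)-1)) ^ (N-1) :=
      pow_le_pow_left₀ (by linarith) hFb _
    have hFapos : (0:ℝ) < (1 + a*(1-ξ)/((N:ℝ)-1)) ^ (N-1) :=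
      pow_pos (by linarith) _
    calc g ξ a = a ^ δ * (1 + a*(1-ξ)/((N:ℝ)-1)) ^ (N-1) := rfl
      _ < b ^ δ * (1 + a*(1-ξ)/((N:ℝ)-1)) ^ (N-1) :=
          mul_lt_mul_of_pos_right h1 hFapos
      _ ≤ b ^ δ * (1 + b*(1-ξ)/((N:ℝ)-1)) ^ (N-1) :=
          mul_le_mul_of_nonneg_left hpow (Real.rpow_nonneg hb.le δ)
  -- existence
  have hex : ∀ ξ ∈ Set.Icc (0:ℝ) 1, ∃ ϱ : ℝ, 0 < ϱ ∧ g ξ ϱ = L := by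
    intro ξ hξ
    have hcont : Continuous (g ξ) := by
      apply Continuous.mul
      · exact continuous_iff_continuousAt.mpr fun x =>
          Real.continuousAt_rpow_const x δ (Or.inr hδ0.le)
      · fun_prop
    set c : ℝ := L / 2 ^ (N-1) with hc
    have hcpos : 0 < c := div_pos hL (pow_pos two_pos _)
    set a : ℝ := min 1 (c ^ δ⁻¹) with ha
    have hapos : 0 < a := lt_min one_pos (Real.rpow_pos_of_pos hcpos _)
    have ha1 : a ≤ 1 := min_le_left _ _
    set b : ℝ := max a ((L+1) ^ δ⁻¹) with hb
    have hab : a ≤ b := le_max_left _ _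
    have hga : g ξ a ≤ L := by
      have haδ : a ^ δ ≤ c := by
        have h1 : a ^ δ ≤ (c ^ δ⁻¹) ^ δ :=
          Real.rpow_le_rpow hapos.le (min_le_right _ _) hδ0.le
        rwa [Real.rpow_inv_rpow hcpos.le (ne_of_gt hδ0)] at h1
      have hF2 : 1 + a*(1-ξ)/((N:ℝ)-1) ≤ 2 := by
        have h1 : a*(1-ξ) ≤ 1 := by nlinarith [hξ.1, hξ.2, hapos]
        have h2 : a*(1-ξ)/((N:ℝ)-1) ≤ 1 := by
          rw [div_le_one hN0]; linarith
        linarith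
      have hFpow : (1 + a*(1-ξ)/((N:ℝ)-1)) ^ (N-1) ≤ 2 ^ (N-1) :=
        pow_le_pow_left₀ (by linarith [hfac1 ξ hξ a hapos.le]) hF2 _
      calc g ξ a ≤ c * 2 ^ (N-1) :=
            mul_le_mul haδ hFpow (pow_nonneg (by linarith [hfac1 ξ hξ a hapos.le]) _) hcpos.le
        _ = L := by rw [hc]; exact div_mul_cancel₀ L (pow_ne_zero _ two_ne_zero)
    have hgb : L ≤ g ξ b := by
      have hb1 : (L+1) ^ δ⁻¹ ≤ b := le_max_right _ _
      have hbδ : L + 1 ≤ b ^ δ := by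
        have h1 : ((L+1) ^ δ⁻¹) ^ δ ≤ b ^ δ :=
          Real.rpow_le_rpow (Real.rpow_nonneg (by linarith) _) hb1 hδ0.le
        rwa [Real.rpow_inv_rpow (by linarith) (ne_of_gt hδ0)] at h1
      have hbpos : (0:ℝ) < b := lt_of_lt_of_le hapos hab
      have hF1 : (1:ℝ) ≤ (1 + b*(1-ξ)/((N:ℝ)-1)) ^ (N-1) :=
        one_le_pow₀ (hfac1 ξ hξ b hbpos.le)
      calc L ≤ b ^ δ := by linarith
        _ = b ^ δ * 1 := (mul_one _).symm
        _ ≤ g ξ b := mul_le_mul_of_nonneg_left hF1 (Real.rpow_nonneg hbpos.le δ)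
    have hL' : L ∈ Set.Icc (g ξ a) (g ξ b) := ⟨hga, hgb⟩
    have := intermediate_value_Icc hab hcont.continuousOn hL'
    obtain ⟨ϱ, hϱmem, hϱ⟩ := this
    exact ⟨ϱ, lt_of_lt_of_le hapos hϱmem.1, hϱ⟩
  constructor
  · intro ξ hξ
    obtain ⟨ϱ, hϱpos, hϱ⟩ := hex ξ hξ
    refine ⟨ϱ, ⟨hϱpos, hϱ⟩, ?_⟩
    rintro q ⟨hqpos, hq⟩
    rcases lt_trichotomy q ϱ with h | h | h
    · exact absurd (hq.trans hϱ.symm) (ne_of_lt (hmono ξ hξ q ϱ hqpos h))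
    · exact h
    · exact absurd (hϱ.trans hq.symm) (ne_of_lt (hmono ξ hξ ϱ q hϱpos h))
  · intro f hf x hx y hy hxy
    obtain ⟨hfx, hgx⟩ := hf x hx
    obtain ⟨hfy, hgy⟩ := hf y hy
    -- g y (f x) < g x (f x) = L
    have hlt : g y (f x) < L := by
      have hbase : 1 + (f x)*(1-y)/((N:ℝ)-1) < 1 + (f x)*(1-x)/((N:ℝ)-1) := by
        have h1 : (f x)*(1-y) < (f x)*(1-x) := by nlinarith
        have h2 : (f x)*(1-y)/((N:ℝ)-1) < (f x)*(1-x)/((N:ℝ)-1) :=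
          div_lt_div_of_pos_right h1 hN0
        linarith
      have hb0 : (1:ℝ) ≤ 1 + (f x)*(1-y)/((N:ℝ)-1) := by
        have : x ≤ 1 := hx.2
        have : y ∈ Set.Icc (0:ℝ) 1 := hy
        exact hfac1 y hy (f x) hfx.le
      have hpow : (1 + (f x)*(1-y)/((N:ℝ)-1)) ^ (N-1) <
          (1 + (f x)*(1-x)/((N:ℝ)-1)) ^ (N-1) :=
        pow_lt_pow_left₀ hbase (by linarith) hn0
      have := mul_lt_mul_of_pos_left hpow (Real.rpow_pos_of_pos hfx δ)
      calc g y (f x) = (f x) ^ δ * (1 + (f x)*(1-y)/((N:ℝ)-1)) ^ (N-1) := rfl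
        _ < (f x) ^ δ * (1 + (f x)*(1-x)/((N:ℝ)-1)) ^ (N-1) := this
        _ = L := hgx
    by_contra hcon
    push_neg at hcon
    rcases eq_or_lt_of_le hcon with h | h
    · rw [← h] at hlt
      exact absurd hgy (ne_of_lt hlt)
    · have := hmono y hy (f y) (f x) hfy h
      rw [show g y (f y) = L from hgy] at this
      linarith
end

section
/- With ϱ(ξ) as above (implicitly defined by ϱ^δ(1 + ϱ(1-ξ)/(N-1))^{N-1} = L), the second derivative satisfies d²ϱ/dξ² > (2/ϱ)(dϱ/dξ)² > 0; in particular ϱ is strictly convex on [0,1]. -/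
open Real Set Filter
open scoped Topology

noncomputable def Gf (m a b ϱ : ℝ) : ℝ := 1 + m * ϱ ^ (-1:ℝ) - m * a * ϱ ^ (-(b+1))
noncomputable def G1f (m a b ϱ : ℝ) : ℝ := -m * ϱ ^ (-2:ℝ) + m * a * (b+1) * ϱ ^ (-(b+2))
noncomputable def G2f (m a b ϱ : ℝ) : ℝ := 2*m * ϱ ^ (-3:ℝ) - m * a * (b+1)*(b+2) * ϱ ^ (-(b+3))

lemma Gf_hasDeriv (m a b : ℝ) {x : ℝ} (hx : 0 < x) :
    HasStrictDerivAt (fun ϱ => Gf m a b ϱ) (G1f m a b x) x := by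
  have h1 : HasStrictDerivAt (fun ϱ : ℝ => ϱ ^ (-1:ℝ)) ((-1) * x ^ ((-1:ℝ)-1)) x :=
    Real.hasStrictDerivAt_rpow_const (Or.inl hx.ne')
  have h2 : HasStrictDerivAt (fun ϱ : ℝ => ϱ ^ (-(b+1):ℝ)) ((-(b+1)) * x ^ ((-(b+1):ℝ)-1)) x :=
    Real.hasStrictDerivAt_rpow_const (Or.inl hx.ne')
  have h := ((h1.const_mul m).const_add 1).sub ((h2.const_mul (m*a)))
  simp only [Gf]
  refine h.congr_deriv ?_
  simp only [G1f]
  rw [show (-1:ℝ)-1 = -2 by ring, show (-(b+1):ℝ)-1 = -(b+2) by ring]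
  ring

lemma G1f_hasDeriv (m a b : ℝ) {x : ℝ} (hx : 0 < x) :
    HasStrictDerivAt (fun ϱ => G1f m a b ϱ) (G2f m a b x) x := by
  have h1 : HasStrictDerivAt (fun ϱ : ℝ => ϱ ^ (-2:ℝ)) ((-2) * x ^ ((-2:ℝ)-1)) x :=
    Real.hasStrictDerivAt_rpow_const (Or.inl hx.ne')
  have h2 : HasStrictDerivAt (fun ϱ : ℝ => ϱ ^ (-(b+2):ℝ)) ((-(b+2)) * x ^ ((-(b+2):ℝ)-1)) x :=
    Real.hasStrictDerivAt_rpow_const (Or.inl hx.ne')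
  have h := (h1.const_mul (-m)).add ((h2.const_mul (m*a*(b+1))))
  simp only [G1f]
  refine h.congr_deriv ?_
  simp only [G2f]
  rw [show (-2:ℝ)-1 = -3 by ring, show (-(b+2):ℝ)-1 = -(b+3) by ring]
  ring

lemma G1f_pos {m a b x : ℝ} (hm : 1 ≤ m) (hb : 0 < b) (hx : 0 < x)
    (h1 : 1 ≤ a * x ^ (-b)) : 0 < G1f m a b x := by
  have hx2 : (0:ℝ) < x ^ (-2:ℝ) := Real.rpow_pos_of_pos hx _
  have e2 : x ^ (-(b+2)) = x ^ (-b) * x ^ (-2:ℝ) := by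
    rw [← Real.rpow_add hx]; ring_nf
  have hv : (0:ℝ) < x ^ (-b) := Real.rpow_pos_of_pos hx _
  simp only [G1f, e2]
  have hm0 : (0:ℝ) < m := lt_of_lt_of_le one_pos hm
  have key : m*(b+1)*x ^ (-2:ℝ) ≤ m*(b+1)*(a*(x ^ (-b))*x ^ (-2:ℝ)) := by
    have h2 : x ^ (-2:ℝ) ≤ a*(x ^ (-b))*x ^ (-2:ℝ) := by
      nlinarith [mul_le_mul_of_nonneg_right h1 hx2.le]
    exact mul_le_mul_of_nonneg_left h2 (by positivity)
  nlinarith [key, mul_pos (mul_pos hm0 hb) hx2]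

lemma key_ineq {m a b x : ℝ} (hm : 0 < m) (ha : 0 < a) (hb : 0 < b) (hx : 0 < x) :
    2 * G1f m a b x / x < -G2f m a b x := by
  have hx3 : (0:ℝ) < x ^ (-3:ℝ) := Real.rpow_pos_of_pos hx _
  have hv : (0:ℝ) < x ^ (-b) := Real.rpow_pos_of_pos hx _
  have e1 : x ^ (-2:ℝ) = x ^ (-3:ℝ) * x := by
    rw [← Real.rpow_add_one hx.ne' (-3:ℝ)]; norm_num
  have e2 : x ^ (-(b+2)) = x ^ (-b) * (x ^ (-3:ℝ) * x) := by
    rw [← e1, ← Real.rpow_add hx]; ring_nf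
  have e3 : x ^ (-(b+3)) = x ^ (-b) * x ^ (-3:ℝ) := by
    rw [← Real.rpow_add hx]; ring_nf
  simp only [G1f, G2f, e1, e2, e3]
  rw [div_lt_iff₀ hx]
  have hpos : 0 < m*a*(b+1)*b*(x ^ (-b))*(x ^ (-3:ℝ))*x := by positivity
  nlinarith [hpos]

lemma final_ineq {p g1 g2 : ℝ} (hp : 0 < p) (hg1 : 0 < g1) (hkey : 2*g1/p < -g2) :
    (2/p) * (g1⁻¹)^2 < -g2 / g1^2 * g1⁻¹ := by
  rw [div_lt_iff₀ hp] at hkey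
  have e1 : (2/p) * (g1⁻¹)^2 = 2 / (p*g1^2) := by field_simp
  have e2 : -g2 / g1^2 * g1⁻¹ = -g2 / g1^3 := by
    rw [← div_eq_mul_inv, div_div, ← pow_succ]
  rw [e1, e2, div_lt_div_iff₀ (by positivity) (by positivity)]
  nlinarith [mul_lt_mul_of_pos_right hkey (by positivity : (0:ℝ) < g1^2)]

theorem rho_second_deriv_convex (δ L : ℝ) (N : ℕ) (hδ : δ ∈ Set.Ioo (0:ℝ) 1)
    (hN : 2 ≤ N) (hL : 0 < L)
    (l₂ : ℝ) (hl₂ : l₂ = 1 + δ / (N - 1))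
    (f : ℝ → ℝ)
    (hf : ∀ ξ ∈ Set.Icc (0:ℝ) 1,
      0 < f ξ ∧ (f ξ) ^ δ * (1 + (f ξ)*(1-ξ)/(N-1)) ^ (N-1) = L) :
    (∀ ξ ∈ Set.Ioo (0:ℝ) 1,
      0 < (2 / f ξ) * (deriv f ξ)^2 ∧
      (2 / f ξ) * (deriv f ξ)^2 < iteratedDeriv 2 f ξ) ∧
    StrictConvexOn ℝ (Set.Icc (0:ℝ) 1) f := by
  obtain ⟨hδ0, hδ1⟩ := hδ
  set m : ℝ := (N:ℝ) - 1 with hmdef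
  have hm1 : (1:ℝ) ≤ m := by
    have : (2:ℝ) ≤ (N:ℝ) := by exact_mod_cast hN
    simp only [hmdef]; linarith
  have hm0 : (0:ℝ) < m := lt_of_lt_of_le one_pos hm1
  have hnm : ((N - 1 : ℕ) : ℝ) = m := by
    rw [Nat.cast_sub (by omega : 1 ≤ N)]; simp [hmdef]
  set a : ℝ := L ^ (1/m) with hadef
  set b : ℝ := δ/m with hbdef
  have ha : 0 < a := Real.rpow_pos_of_pos hL _
  have hb : 0 < b := div_pos hδ0 hm0
  set M : ℝ := a ^ (1/b) with hMdef
  have hM : 0 < M := Real.rpow_pos_of_pos ha _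
  have hMb : M ^ b = a := by
    rw [hMdef, ← Real.rpow_mul ha.le, one_div_mul_cancel hb.ne', Real.rpow_one]
  -- key curve facts
  have hcurve : ∀ ξ ∈ Icc (0:ℝ) 1,
      a * (f ξ) ^ (-b) = 1 + f ξ * (1-ξ)/m ∧ Gf m a b (f ξ) = ξ ∧ f ξ ≤ M := by
    intro ξ hξ
    obtain ⟨hp, heq⟩ := hf ξ hξ
    set p := f ξ with hpdef
    have hA1 : (1:ℝ) ≤ 1 + p * (1-ξ)/m := by
      have h1ξ : 0 ≤ 1 - ξ := by linarith [hξ.2]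
      have : 0 ≤ p * (1-ξ)/m := by positivity
      linarith
    have hApos : (0:ℝ) < 1 + p * (1-ξ)/m := lt_of_lt_of_le one_pos hA1
    have hpd : (0:ℝ) < p ^ δ := Real.rpow_pos_of_pos hp _
    have hAm : (1 + p * (1-ξ)/m) ^ (m:ℝ) = L / p ^ δ := by
      rw [← hnm, Real.rpow_natCast, hnm]
      field_simp at heq ⊢
      linarith [heq]
    have hstar : a * p ^ (-b) = 1 + p * (1-ξ)/m := by
      have h1 : ((1 + p * (1-ξ)/m) ^ (m:ℝ)) ^ (1/m) = 1 + p * (1-ξ)/m := by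
        rw [← Real.rpow_mul hApos.le, mul_one_div_cancel hm0.ne', Real.rpow_one]
      rw [hAm] at h1
      have hbeq : δ * (1/m) = b := by rw [hbdef]; ring
      rw [← h1, Real.div_rpow hL.le hpd.le, ← Real.rpow_mul hp.le, hbeq,
        Real.rpow_neg hp.le, ← hadef]
      exact (div_eq_mul_inv _ _).symm
    have hble : p ^ b ≤ a := by
      have hpb : (0:ℝ) < p ^ b := Real.rpow_pos_of_pos hp _
      have hinvb : p ^ (-b) * p ^ b = 1 := by
        rw [← Real.rpow_add hp]; simp
      nlinarith [hstar, hA1, hpb]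
    have hpM : p ≤ M := by
      rw [← Real.rpow_le_rpow_iff hp.le hM.le hb, hMb]; exact hble
    refine ⟨hstar, ?_, hpM⟩
    have e : p ^ (-(b+1)) = p ^ (-b) * p ^ (-1:ℝ) := by
      rw [← Real.rpow_add hp]; ring_nf
    have e1 : p ^ (-1:ℝ) = p⁻¹ := Real.rpow_neg_one p
    simp only [Gf, e, e1]
    rw [show m * a * (p ^ (-b) * p⁻¹) = m * (a * p ^ (-b)) * p⁻¹ by ring, hstar]
    field_simp
    ring
  have hpm : ∀ ξ ∈ Icc (0:ℝ) 1, f ξ ∈ Ioc 0 M := fun ξ hξ =>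
    ⟨(hf ξ hξ).1, (hcurve ξ hξ).2.2⟩
  have hGf : ∀ ξ ∈ Icc (0:ℝ) 1, Gf m a b (f ξ) = ξ := fun ξ hξ => (hcurve ξ hξ).2.1
  -- 1 ≤ a x^{-b} for x ∈ Ioc 0 M
  have hone : ∀ x ∈ Ioc (0:ℝ) M, 1 ≤ a * x ^ (-b) := by
    intro x hx
    have hxb : (0:ℝ) < x ^ b := Real.rpow_pos_of_pos hx.1 _
    have hle : x ^ b ≤ a := by
      rw [← hMb]; exact Real.rpow_le_rpow hx.1.le hx.2 hb.le
    have hinvb : x ^ (-b) * x ^ b = 1 := by rw [← Real.rpow_add hx.1]; simp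
    have hxnb : (0:ℝ) < x ^ (-b) := Real.rpow_pos_of_pos hx.1 _
    nlinarith
  -- G strictly monotone on Ioc 0 M
  have hGmono : StrictMonoOn (fun ϱ => Gf m a b ϱ) (Ioc 0 M) := by
    apply strictMonoOn_of_deriv_pos (convex_Ioc 0 M)
    · exact fun x hx => ((Gf_hasDeriv m a b hx.1).hasDerivAt.continuousAt).continuousWithinAt
    · intro x hx
      rw [interior_Ioc] at hx
      rw [(Gf_hasDeriv m a b hx.1).hasDerivAt.deriv]
      exact G1f_pos hm1 hb hx.1 (hone x (Ioo_subset_Ioc_self hx))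
  have hinj := hGmono.injOn
  -- strict monotonicity of f
  have hfmono : StrictMonoOn f (Icc (0:ℝ) 1) := by
    intro x hx y hy hxy
    have h := hGmono.lt_iff_lt (hpm x hx) (hpm y hy)
    rw [hGf x hx, hGf y hy] at h
    exact h.1 hxy
  -- derivative of f at interior points
  have hD : ∀ ξ ∈ Ioo (0:ℝ) 1, HasStrictDerivAt f (G1f m a b (f ξ))⁻¹ ξ := by
    intro ξ hξ
    have hξ' : ξ ∈ Icc (0:ℝ) 1 := Ioo_subset_Icc_self hξ
    have hp : 0 < f ξ := (hf ξ hξ').1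
    have hpM : f ξ < M := by
      rcases lt_or_eq_of_le (hpm ξ hξ').2 with h | h
      · exact h
      · exfalso
        have h1 : Gf m a b (f 1) = 1 := hGf 1 (by constructor <;> norm_num)
        have h2 : Gf m a b (f ξ) = ξ := hGf ξ hξ'
        have hf1M : f 1 ≤ M := (hpm 1 (by constructor <;> norm_num)).2
        have hMf1 : f 1 = M := by
          by_contra hne
          have : f ξ < f 1 := by
            rw [← (hGmono.lt_iff_lt (hpm ξ hξ') (hpm 1 (by constructor <;> norm_num)))] at *
            rw [h1, h2]; exact hξ.2
          rw [h] at this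
          exact absurd (le_antisymm hf1M this.le) hne
        have : ξ = 1 := by rw [← h2, h, ← hMf1, h1]
        linarith [hξ.2]
    have hstrict := Gf_hasDeriv m a b hp
    have hne : G1f m a b (f ξ) ≠ 0 :=
      (G1f_pos hm1 hb hp (hone _ (hpm ξ hξ'))).ne'
    have hev : ∀ᶠ ϱ in 𝓝 (f ξ), f (Gf m a b ϱ) = ϱ := by
      have h1' : Ioo (0:ℝ) M ∈ 𝓝 (f ξ) := isOpen_Ioo.mem_nhds ⟨hp, hpM⟩
      have h2' : ∀ᶠ ϱ in 𝓝 (f ξ), Gf m a b ϱ ∈ Ioo (0:ℝ) 1 :=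
        (hstrict.hasDerivAt.continuousAt).eventually_mem (isOpen_Ioo.mem_nhds (by
          rw [hGf ξ hξ']; exact hξ))
      filter_upwards [h1', h2'] with ϱ hϱ hGϱ
      have hmem2 : Gf m a b ϱ ∈ Icc (0:ℝ) 1 := Ioo_subset_Icc_self hGϱ
      exact hinj (hpm _ hmem2) (Ioo_subset_Ioc_self hϱ) (hGf _ hmem2)
    have := hstrict.to_local_left_inverse hne hev
    rwa [hGf ξ hξ'] at this
  have hderiv : ∀ ξ ∈ Ioo (0:ℝ) 1, deriv f ξ = (G1f m a b (f ξ))⁻¹ :=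
    fun ξ hξ => ((hD ξ hξ).hasDerivAt).deriv
  -- second derivative
  have hD2 : ∀ ξ ∈ Ioo (0:ℝ) 1, HasDerivAt (deriv f)
      (-(G2f m a b (f ξ)) / (G1f m a b (f ξ))^2 * (G1f m a b (f ξ))⁻¹) ξ := by
    intro ξ hξ
    have hξ' : ξ ∈ Icc (0:ℝ) 1 := Ioo_subset_Icc_self hξ
    have hp : 0 < f ξ := (hf ξ hξ').1
    have hne : G1f m a b (f ξ) ≠ 0 :=
      (G1f_pos hm1 hb hp (hone _ (hpm ξ hξ'))).ne'
    have hinvD : HasDerivAt (fun ϱ => (G1f m a b ϱ)⁻¹)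
        (-(G2f m a b (f ξ)) / (G1f m a b (f ξ))^2) (f ξ) :=
      ((G1f_hasDeriv m a b hp).hasDerivAt).inv hne
    have hcomp := hinvD.comp ξ (hD ξ hξ).hasDerivAt
    apply hcomp.congr_of_eventuallyEq
    filter_upwards [isOpen_Ioo.mem_nhds hξ] with x hx
    exact hderiv x hx
  have hiter : ∀ ξ ∈ Ioo (0:ℝ) 1, iteratedDeriv 2 f ξ =
      -(G2f m a b (f ξ)) / (G1f m a b (f ξ))^2 * (G1f m a b (f ξ))⁻¹ := by
    intro ξ hξ
    rw [show (2:ℕ) = 1 + 1 from rfl, iteratedDeriv_succ, iteratedDeriv_one]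
    exact (hD2 ξ hξ).deriv
  -- main pointwise statement
  have hmain : ∀ ξ ∈ Ioo (0:ℝ) 1,
      0 < (2 / f ξ) * (deriv f ξ)^2 ∧
      (2 / f ξ) * (deriv f ξ)^2 < iteratedDeriv 2 f ξ := by
    intro ξ hξ
    have hξ' : ξ ∈ Icc (0:ℝ) 1 := Ioo_subset_Icc_self hξ
    have hp : 0 < f ξ := (hf ξ hξ').1
    have hg1 : 0 < G1f m a b (f ξ) := G1f_pos hm1 hb hp (hone _ (hpm ξ hξ'))
    rw [hderiv ξ hξ, hiter ξ hξ]
    constructor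
    · exact mul_pos (div_pos two_pos hp) (pow_pos (inv_pos.2 hg1) 2)
    · exact final_ineq hp hg1 (key_ineq hm0 ha hb hp)
  -- continuity of f on Icc 0 1
  have h01 : (0:ℝ) ∈ Icc (0:ℝ) 1 := by constructor <;> norm_num
  have h11 : (1:ℝ) ∈ Icc (0:ℝ) 1 := by constructor <;> norm_num
  have hf01 : f 0 < f 1 := hfmono h01 h11 one_pos
  have hsurj : ∀ y ∈ Icc (f 0) (f 1), ∃ c ∈ Icc (0:ℝ) 1, f c = y := by
    intro y hy
    have hy0 : 0 < y := lt_of_lt_of_le (hpm 0 h01).1 hy.1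
    have hyM : y ≤ M := le_trans hy.2 (hpm 1 h11).2
    have hymem : y ∈ Ioc (0:ℝ) M := ⟨hy0, hyM⟩
    refine ⟨Gf m a b y, ⟨?_, ?_⟩, ?_⟩
    · have := (hGmono.le_iff_le (hpm 0 h01) hymem).2 hy.1
      rwa [hGf 0 h01] at this
    · have := (hGmono.le_iff_le hymem (hpm 1 h11)).2 hy.2
      rwa [hGf 1 h11] at this
    · have hGy01 : Gf m a b y ∈ Icc (0:ℝ) 1 := by
        constructor
        · have := (hGmono.le_iff_le (hpm 0 h01) hymem).2 hy.1
          rwa [hGf 0 h01] at this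
        · have := (hGmono.le_iff_le hymem (hpm 1 h11)).2 hy.2
          rwa [hGf 1 h11] at this
      exact hinj (hpm _ hGy01) hymem (hGf _ hGy01)
  have hcont : ContinuousOn f (Icc (0:ℝ) 1) := by
    intro x hx
    rcases eq_or_lt_of_le hx.1 with h0 | h0
    · have hcw : ContinuousWithinAt f (Ici (0:ℝ)) 0 := by
        apply hfmono.continuousWithinAt_right_of_exists_between
          (Icc_mem_nhdsGE_of_mem ⟨le_refl (0:ℝ), one_pos⟩)
        intro y hy
        obtain ⟨c, hc, hfc⟩ := hsurj (min y (f 1)) ⟨le_min hy.le (hf01.le), min_le_right _ _⟩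
        exact ⟨c, hc, by rw [hfc]; exact lt_min hy hf01, by rw [hfc]; exact min_le_left _ _⟩
      rw [← h0]
      exact hcw.mono Icc_subset_Ici_self
    · rcases eq_or_lt_of_le hx.2 with h1 | h1
      · have hcw : ContinuousWithinAt f (Iic (1:ℝ)) 1 := by
          apply hfmono.continuousWithinAt_left_of_exists_between
            (Icc_mem_nhdsLE_of_mem ⟨one_pos, le_refl (1:ℝ)⟩)
          intro y hy
          obtain ⟨c, hc, hfc⟩ := hsurj (max y (f 0)) ⟨le_max_right _ _, max_le hy.le hf01.le⟩
          exact ⟨c, hc, by rw [hfc]; exact le_max_left _ _, by rw [hfc]; exact max_lt hy hf01⟩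
        rw [h1]
        exact hcw.mono Icc_subset_Iic_self
      · exact ((hD x ⟨h0, h1⟩).hasDerivAt.differentiableAt.continuousAt).continuousWithinAt
  refine ⟨hmain, ?_⟩
  apply strictConvexOn_of_deriv2_pos (convex_Icc 0 1) hcont
  intro x hx
  rw [interior_Icc] at hx
  have := hmain x hx
  rw [← iteratedDeriv_eq_iterate]
  exact lt_trans this.1 this.2
end

section
/- Let κ > 0 and let ϱ : [0,1] → (0, ∞) be strictly increasing, strictly convex (indeed satisfying ϱ'' > (2/ϱ)(ϱ')²), with ϱ(ξ) < κ for all ξ in the feasible set. Then the function R(ξ) = log₂((1 + κξ)/(1 + ϱ(ξ)ξ)) is strictly concave on the feasible set. -/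
open Set Filter Real Topology

/-- derivative is nonneg at a point around which `f` is strictly monotone on a ball -/
lemma deriv_nonneg_of_strictMonoOn_ball {f : ℝ → ℝ} {x ε : ℝ} (hε : 0 < ε)
    (hd : DifferentiableAt ℝ f x)
    (hm : StrictMonoOn f (Set.Ioo (x - ε) (x + ε))) : 0 ≤ deriv f x := by
  have hx : x ∈ Set.Ioo (x - ε) (x + ε) := by constructor <;> linarith
  have hslope : Tendsto (slope f x) (𝓝[>] x) (𝓝 (deriv f x)) :=
    ((hasDerivAt_iff_tendsto_slope.mp hd.hasDerivAt)).mono_left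
      (nhdsWithin_mono x (by intro y hy; exact ne_of_gt hy))
  refine ge_of_tendsto hslope ?_
  have hmem : Set.Ioo x (x + ε) ∈ 𝓝[>] x :=
    Ioo_mem_nhdsGT_of_mem (Set.mem_Ico.mpr ⟨le_refl x, by linarith⟩)
  filter_upwards [hmem] with y hy
  have hy' : y ∈ Set.Ioo (x - ε) (x + ε) := ⟨by linarith [hy.1], hy.2⟩
  have := hm hx hy' hy.1
  have hxy : 0 < y - x := by linarith [hy.1]
  rw [slope_def_field]
  exact div_nonneg (by linarith) hxy.le

theorem secrecy_rate_concave (κ : ℝ) (hκ : 0 < κ) (S : Set ℝ)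
    (hS : S ⊆ Set.Icc (0:ℝ) 1) (hconv : Convex ℝ S)
    (ϱ : ℝ → ℝ) (hsmooth : ContDiff ℝ 2 ϱ)
    (hpos : ∀ ξ ∈ S, 0 < ϱ ξ) (hlt : ∀ ξ ∈ S, ϱ ξ < κ)
    (hmono : StrictMonoOn ϱ S)
    (hconvexity : ∀ ξ ∈ S, (2 / ϱ ξ) * (deriv ϱ ξ)^2 < iteratedDeriv 2 ϱ ξ)
    (R : ℝ → ℝ)
    (hR : R = fun ξ => Real.logb 2 ((1 + κ*ξ) / (1 + (ϱ ξ)*ξ))) :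
    StrictConcaveOn ℝ S R := by
  have hϱdiff : Differentiable ℝ ϱ := hsmooth.differentiable (by norm_num)
  have hϱ'diff : Differentiable ℝ (deriv ϱ) := by
    have h2 : ContDiff ℝ (1 + 1 : ℕ) ϱ := by exact_mod_cast hsmooth
    exact (((contDiff_succ_iff_deriv (n := 1)).mp (by exact_mod_cast h2)).2.2).differentiable (by simp)
  -- positivity of denominators on S
  have hNpos : ∀ y ∈ S, 0 < 1 + κ * y := fun y hy => by
    have := (hS hy).1; nlinarith
  have hDpos : ∀ y ∈ S, 0 < 1 + ϱ y * y := fun y hy => by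
    have := (hS hy).1; have := hpos y hy; nlinarith
  -- continuity of R on S
  have hcontN : Continuous fun ξ : ℝ => 1 + κ * ξ := by continuity
  have hcontD : Continuous fun ξ : ℝ => 1 + ϱ ξ * ξ :=
    continuous_const.add (hϱdiff.continuous.mul continuous_id)
  have hRcont : ContinuousOn R S := by
    rw [hR]
    simp only [Real.logb]
    apply ContinuousOn.div_const
    apply ContinuousOn.log
    · exact (hcontN.continuousOn.div hcontD.continuousOn
        (fun y hy => (hDpos y hy).ne'))
    · intro y hy
      exact (div_pos (hNpos y hy) (hDpos y hy)).ne'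
  apply strictConcaveOn_of_deriv2_neg hconv hRcont
  intro x hxint
  have hxS : x ∈ S := interior_subset hxint
  have hxIoo : x ∈ Set.Ioo (0:ℝ) 1 := by
    have : interior S ⊆ interior (Set.Icc (0:ℝ) 1) := interior_mono hS
    simpa [interior_Icc] using this hxint
  have hx0 : 0 < x := hxIoo.1
  set p := ϱ x with hp_def
  set p' := deriv ϱ x with hp'_def
  set p'' := deriv (deriv ϱ) x with hp''_def
  have hp : 0 < p := hpos x hxS
  have hpκ : p < κ := hlt x hxS
  -- p' ≥ 0
  have hp' : 0 ≤ p' := by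
    obtain ⟨ε, hε, hball⟩ := Metric.isOpen_iff.mp isOpen_interior x hxint
    have hsub : Set.Ioo (x - ε) (x + ε) ⊆ S := by
      intro y hy
      apply interior_subset (hball ?_)
      rw [Real.ball_eq_Ioo]; exact hy
    exact deriv_nonneg_of_strictMonoOn_ball hε (hϱdiff x) (hmono.mono hsub)
  -- p'' bound
  have hpp2 : 2 * p' ^ 2 < p * p'' := by
    have h := hconvexity x hxS
    rw [iteratedDeriv_succ, iteratedDeriv_one] at h
    rw [div_mul_eq_mul_div, div_lt_iff₀ hp] at h
    nlinarith [h]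
  -- set up local expressions
  set U := interior S with hU_def
  have hUopen : IsOpen U := isOpen_interior
  have hUmem : U ∈ 𝓝 x := hUopen.mem_nhds hxint
  -- explicit first derivative function
  set g1 : ℝ → ℝ := fun y => κ / (1 + κ * y) - (deriv ϱ y * y + ϱ y) / (1 + ϱ y * y)
    with hg1_def
  have hDerivR : ∀ y ∈ U, deriv R y = g1 y / Real.log 2 := by
    intro y hyU
    have hyS : y ∈ S := interior_subset hyU
    have hN : (0:ℝ) < 1 + κ * y := hNpos y hyS
    have hD : (0:ℝ) < 1 + ϱ y * y := hDpos y hyS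
    -- HasDerivAt for the numerator-log
    have hN' : HasDerivAt (fun ξ : ℝ => 1 + κ * ξ) κ y := by
      simpa using ((hasDerivAt_id y).const_mul κ).const_add 1
    have hD' : HasDerivAt (fun ξ : ℝ => 1 + ϱ ξ * ξ) (deriv ϱ y * y + ϱ y) y := by
      have h1 : HasDerivAt (fun ξ : ℝ => ϱ ξ * ξ) (deriv ϱ y * y + ϱ y * 1) y :=
        ((hϱdiff y).hasDerivAt).mul (hasDerivAt_id y)
      simpa using h1.const_add 1
    have hlogN : HasDerivAt (fun ξ : ℝ => Real.log (1 + κ * ξ)) (κ / (1 + κ * y)) y :=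
      hN'.log hN.ne'
    have hlogD : HasDerivAt (fun ξ : ℝ => Real.log (1 + ϱ ξ * ξ))
        ((deriv ϱ y * y + ϱ y) / (1 + ϱ y * y)) y := hD'.log hD.ne'
    have hh : HasDerivAt
        (fun ξ : ℝ => (Real.log (1 + κ * ξ) - Real.log (1 + ϱ ξ * ξ)) / Real.log 2)
        (g1 y / Real.log 2) y := (hlogN.sub hlogD).div_const _
    have hEq : R =ᶠ[𝓝 y] fun ξ =>
        (Real.log (1 + κ * ξ) - Real.log (1 + ϱ ξ * ξ)) / Real.log 2 := by
      filter_upwards [hUopen.mem_nhds hyU] with z hzU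
      have hzS : z ∈ S := interior_subset hzU
      rw [hR]
      simp only [Real.logb]
      rw [Real.log_div (hNpos z hzS).ne' (hDpos z hzS).ne']
    exact ((hh.congr_of_eventuallyEq hEq)).deriv
  -- second derivative
  have hEq2 : deriv R =ᶠ[𝓝 x] fun y => g1 y / Real.log 2 :=
    Filter.eventuallyEq_of_mem hUmem hDerivR
  have hiter : deriv^[2] R x = deriv (deriv R) x := rfl
  rw [hiter, hEq2.deriv_eq]
  -- derivative of g1 at x
  have hN : (0:ℝ) < 1 + κ * x := hNpos x hxS
  have hD : (0:ℝ) < 1 + p * x := hDpos x hxS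
  have hterm1 : HasDerivAt (fun y : ℝ => κ / (1 + κ * y))
      ((0 * (1 + κ * x) - κ * κ) / (1 + κ * x) ^ 2) x := by
    have hN' : HasDerivAt (fun ξ : ℝ => 1 + κ * ξ) κ x := by
      simpa using ((hasDerivAt_id x).const_mul κ).const_add 1
    exact (hasDerivAt_const x κ).div hN' hN.ne'
  have hA : HasDerivAt (fun y : ℝ => deriv ϱ y * y + ϱ y) (p'' * x + p' * 1 + p') x := by
    exact (((hϱ'diff x).hasDerivAt).mul (hasDerivAt_id x)).add ((hϱdiff x).hasDerivAt)
  have hDd : HasDerivAt (fun y : ℝ => 1 + ϱ y * y) (p' * x + p * 1) x := by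
    simpa using (((hϱdiff x).hasDerivAt).mul (hasDerivAt_id x)).const_add 1
  have hterm2 : HasDerivAt (fun y : ℝ => (deriv ϱ y * y + ϱ y) / (1 + ϱ y * y))
      (((p'' * x + p' * 1 + p') * (1 + p * x) - (p' * x + p) * (p' * x + p * 1))
        / (1 + p * x) ^ 2) x := by
    have := hA.div hDd (hD.ne')
    exact this
  have hg1' : HasDerivAt g1
      ((0 * (1 + κ * x) - κ * κ) / (1 + κ * x) ^ 2 -
       ((p'' * x + p' * 1 + p') * (1 + p * x) - (p' * x + p) * (p' * x + p * 1))
        / (1 + p * x) ^ 2) x := hterm1.sub hterm2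
  rw [deriv_div_const, hg1'.deriv]
  -- final inequality
  apply div_neg_of_neg_of_pos _ (Real.log_pos (by norm_num))
  -- algebra
  have key : (p' * x + p) * (p' * x + p) - (p'' * x + p' * 1 + p') * (1 + p * x) < p * p := by
    have hq : 0 < x * (1 + p * x) * (p * p'' - 2 * p' ^ 2) :=
      mul_pos (mul_pos hx0 hD) (by linarith)
    have key2 : p * ((p' * x + p) * (p' * x + p) - (p'' * x + p' * 1 + p') * (1 + p * x)) < p * (p * p) := by
      nlinarith [hq, mul_nonneg (mul_nonneg hp.le (mul_nonneg hp' hp'))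
          (mul_nonneg hx0.le hx0.le),
        mul_nonneg (mul_nonneg hp' hp') hx0.le, mul_nonneg hp.le hp']
    exact lt_of_mul_lt_mul_left key2 hp.le
  have hpN : p * (1 + κ * x) < κ * (1 + p * x) := by nlinarith
  have h3 : p * p / (1 + p * x) ^ 2 < κ * κ / (1 + κ * x) ^ 2 := by
    rw [div_lt_div_iff₀ (by positivity) (by positivity)]
    have h := mul_self_lt_mul_self (mul_pos hp hN).le hpN
    nlinarith [h]
  have h4 : ((p' * x + p) * (p' * x + p) - (p'' * x + p' * 1 + p') * (1 + p * x)) / (1 + p * x) ^ 2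
      < p * p / (1 + p * x) ^ 2 :=
    (div_lt_div_iff_of_pos_right (by positivity)).mpr key
  have e1 : (0 * (1 + κ * x) - κ * κ) / (1 + κ * x) ^ 2 = -(κ * κ / (1 + κ * x) ^ 2) := by
    ring
  have e2 : ((p'' * x + p' * 1 + p') * (1 + p * x) - (p' * x + p) * (p' * x + p * 1))
      / (1 + p * x) ^ 2
      = -(((p' * x + p) * (p' * x + p) - (p'' * x + p' * 1 + p') * (1 + p * x)) / (1 + p * x) ^ 2) := by
    ring
  rw [e1, e2]
  linarith [h3, h4]
end
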